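/- (Finite analogue of Ramanujan's Entry 2.) Let N be a positive integer and q ∈ ℂ with |q| < 1. Let a ∈ ℂ with a·q^k ≠ 1 for 1 ≤ k ≤ N. Then (aq;q)_N · ∑_{n=1}^{N} [N choose n]_q · n a^n q^{n^2} / (aq;q)_n = ∑_{n=1}^{N} [N choose n]_q · (q;q)_n (−1)^{n−1} a^n q^{n(n+1)/2} / (1 − q^n). -/

import Mathlib

/-!
Clearing the denominators, the left side is `∑ n [N n] aⁿ q^(n²) (a q^(n+1); q)_(N-n)`.
Expanding the Pochhammer factor by the q-binomial theorem
`(x; q)_k = ∑ n [k n] (-1)ⁿ q^(n choose 2) xⁿ` and collecting terms of total degree `k` in `a`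
(using `[N n] [N-n m] = [N n+m] [n+m n]`) gives
`∑ k [N k] (-a)ᵏ q^(k+1 choose 2) ∑ n n [k n] (-1)ⁿ q^(n choose 2)`.
The inner sum is the derivative at `x = 1` of `(x; q)_k = (1 - x) (xq; q)_(k-1)`, that is
`-(q; q)_(k-1) = -(q; q)_k / (1 - q^k)`.
-/

open Finset

/-- Finite q-Pochhammer symbol `(a;q)_n = ∏_{k=0}^{n-1} (1 - a q^k)`. -/
noncomputable def qPoch (q a : ℂ) (n : ℕ) : ℂ :=
  ∏ k ∈ Finset.range n, (1 - a * q ^ k)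

/-- Infinite q-Pochhammer symbol `(a;q)_∞ = ∏_{k=0}^{∞} (1 - a q^k)`. -/
noncomputable def qPochInf (q a : ℂ) : ℂ :=
  ∏' k : ℕ, (1 - a * q ^ k)

/-- Gaussian (q-binomial) coefficient `[N choose n]_q`. -/
noncomputable def qBinom (q : ℂ) (N n : ℕ) : ℂ :=
  qPoch q q N / (qPoch q q n * qPoch q q (N - n))

section

variable {q : ℂ}

lemma qPoch_zero (b : ℂ) : qPoch q b 0 = 1 := prod_range_zero _

lemma qPoch_succ (b : ℂ) (n : ℕ) : qPoch q b (n + 1) = qPoch q b n * (1 - b * q ^ n) :=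
  prod_range_succ _ n

lemma qPoch_succ' (b : ℂ) (n : ℕ) : qPoch q b (n + 1) = (1 - b) * qPoch q (b * q) n := by
  rw [qPoch, prod_range_succ', mul_comm]
  simp only [qPoch, pow_zero, mul_one, pow_succ', mul_assoc]

lemma qPoch_add (b : ℂ) (m n : ℕ) :
    qPoch q b (m + n) = qPoch q b m * qPoch q (b * q ^ m) n := by
  simp only [qPoch, prod_range_add, pow_add, mul_assoc, mul_comm (q ^ m)]

lemma qPoch_ne_zero {b : ℂ} {n : ℕ} (h : ∀ k < n, b * q ^ k ≠ 1) : qPoch q b n ≠ 0 :=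
  prod_ne_zero_iff.2 fun k hk => sub_ne_zero.2 (h k (mem_range.1 hk)).symm

lemma qPoch_div_qPoch {b : ℂ} {m n : ℕ} (hmn : m ≤ n) (hm : qPoch q b m ≠ 0) :
    qPoch q b n / qPoch q b m = qPoch q (b * q ^ m) (n - m) := by
  rw [div_eq_iff hm, ← Nat.add_sub_cancel' hmn, qPoch_add, Nat.add_sub_cancel_left, mul_comm]

lemma qPoch_self_ne_zero_of_norm_lt_one (hq : ‖q‖ < 1) (n : ℕ) : qPoch q q n ≠ 0 :=
  qPoch_ne_zero fun k _ h => by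
    rw [← pow_succ'] at h
    exact hq.ne (Complex.norm_eq_one_of_pow_eq_one h k.succ_ne_zero)

lemma sum_Icc_one_eq_sum_range {M : Type*} [AddCommMonoid M] {f : ℕ → M} (h0 : f 0 = 0)
    (N : ℕ) : ∑ n ∈ Icc 1 N, f n = ∑ n ∈ range (N + 1), f n := by
  rw [range_eq_Ico, sum_eq_sum_Ico_succ_bot N.succ_pos, h0, zero_add, zero_add,
    Nat.succ_eq_add_one, Ico_add_one_right_eq_Icc]

lemma Nat.sq_add_succ_mul_add_choose_two (n m : ℕ) :
    n ^ 2 + (n + 1) * m + m.choose 2 = (n + m + 1).choose 2 + n.choose 2 := by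
  have h : ((n ^ 2 + (n + 1) * m + m.choose 2 : ℕ) : ℚ) =
      ((n + m + 1).choose 2 + n.choose 2 : ℕ) := by
    push_cast [Nat.cast_choose_two]
    ring
  exact_mod_cast h

section
variable (hq : ∀ n, qPoch q q n ≠ 0)
include hq

lemma one_sub_pow_succ_ne_zero (n : ℕ) : 1 - q ^ (n + 1) ≠ 0 := by
  have := hq (n + 1)
  rw [qPoch_succ, ← pow_succ'] at this
  exact right_ne_zero_of_mul this

lemma qBinom_zero_right (n : ℕ) : qBinom q n 0 = 1 := by
  rw [qBinom, qPoch_zero, one_mul, Nat.sub_zero, div_self (hq n)]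

lemma qBinom_self (n : ℕ) : qBinom q n n = 1 := by
  rw [qBinom, Nat.sub_self, qPoch_zero, mul_one, div_self (hq n)]

lemma qBinom_succ_succ {m n : ℕ} (h : n < m) :
    qBinom q (m + 1) (n + 1) = qBinom q m n + q ^ (n + 1) * qBinom q m (n + 1) := by
  obtain ⟨s, rfl⟩ := Nat.exists_eq_add_of_lt h
  simp only [qBinom, show n + s + 1 + 1 - (n + 1) = s + 1 by omega,
    show n + s + 1 - n = s + 1 by omega, show n + s + 1 - (n + 1) = s by omega]
  simp only [qPoch_succ, ← pow_succ']
  have := hq n; have := hq s; have := hq (n + s + 1)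
  have := one_sub_pow_succ_ne_zero hq n; have := one_sub_pow_succ_ne_zero hq s
  field_simp
  ring

lemma qBinom_mul_qBinom {N m n : ℕ} (h : m + n ≤ N) :
    qBinom q N m * qBinom q (N - m) n = qBinom q N (m + n) * qBinom q (m + n) m := by
  obtain ⟨r, rfl⟩ := Nat.exists_eq_add_of_le h
  simp only [qBinom, Nat.add_sub_cancel_left, show m + n + r - m = n + r by omega,
    show n + r - n = r by omega]
  have := hq m; have := hq n; have := hq r; have := hq (n + r); have := hq (m + n)
  have := hq (m + n + r)
  field_simp

theorem qPoch_eq_sum_qBinom (x : ℂ) (M : ℕ) :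
    qPoch q x M = ∑ n ∈ range (M + 1), qBinom q M n * (-1) ^ n * q ^ n.choose 2 * x ^ n := by
  induction M generalizing x with
  | zero => simp [qPoch_zero, qBinom_zero_right hq]
  | succ M ih =>
    have pascal : ∀ n ∈ range M,
        qBinom q (M + 1) (n + 1) * (-1) ^ (n + 1) * q ^ (n + 1).choose 2 * x ^ (n + 1) =
          qBinom q M (n + 1) * (-1) ^ (n + 1) * q ^ (n + 1).choose 2 * (x * q) ^ (n + 1) -
            x * (qBinom q M n * (-1) ^ n * q ^ n.choose 2 * (x * q) ^ n) := by
      intro n hn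
      rw [qBinom_succ_succ hq (mem_range.1 hn), Nat.choose_succ_succ', Nat.choose_one_right]
      ring
    have hfirst := sum_range_succ'
      (fun n => qBinom q M n * (-1) ^ n * q ^ n.choose 2 * (x * q) ^ n) M
    have hlast := sum_range_succ
      (fun n => qBinom q M n * (-1) ^ n * q ^ n.choose 2 * (x * q) ^ n) M
    rw [qPoch_succ', ih]
    conv_rhs => rw [sum_range_succ', sum_range_succ, sum_congr rfl pascal, sum_sub_distrib,
      ← mul_sum]
    simp only [qBinom_self hq, qBinom_zero_right hq] at hfirst hlast ⊢
    rw [Nat.choose_succ_succ' M, Nat.choose_one_right]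
    linear_combination hfirst - x * hlast

theorem sum_natCast_mul_qBinom_eq_neg_qPoch (k : ℕ) :
    ∑ n ∈ range (k + 2), (n : ℂ) * (qBinom q (k + 1) n * (-1) ^ n * q ^ n.choose 2) =
      -qPoch q q k := by
  have hprod : HasDerivAt (fun x => qPoch q x (k + 1)) (-qPoch q q k) 1 := by
    rw [show (fun x => qPoch q x (k + 1)) = fun x => (1 - x) * qPoch q (x * q) k from
      funext fun x => qPoch_succ' x k]
    have hd : DifferentiableAt ℂ (fun x => qPoch q (x * q) k) 1 := by
      unfold qPoch; fun_prop
    exact ((hasDerivAt_id' (x := (1 : ℂ))).const_sub 1).mul hd.hasDerivAt |>.congr_deriv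
      (by simp)
  have hsum : HasDerivAt
      (fun x => ∑ n ∈ range (k + 2), qBinom q (k + 1) n * (-1) ^ n * q ^ n.choose 2 * x ^ n)
      (∑ n ∈ range (k + 2), (n : ℂ) * (qBinom q (k + 1) n * (-1) ^ n * q ^ n.choose 2)) 1 :=
    HasDerivAt.fun_sum fun n _ =>
      (hasDerivAt_pow n (1 : ℂ)).const_mul _ |>.congr_deriv (by simp [mul_comm])
  simp only [← qPoch_eq_sum_qBinom hq] at hsum
  exact hsum.unique hprod

lemma qPoch_self_div_one_sub_pow_eq_sum (a : ℂ) {k : ℕ} (hk : 1 ≤ k) :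
    qPoch q q k * (-1) ^ (k - 1) * a ^ k * q ^ (k * (k + 1) / 2) / (1 - q ^ k) =
      (-a) ^ k * q ^ (k + 1).choose 2 *
        ∑ n ∈ range (k + 1), (n : ℂ) * (qBinom q k n * (-1) ^ n * q ^ n.choose 2) := by
  obtain ⟨j, rfl⟩ := Nat.exists_eq_add_of_le' hk
  rw [sum_natCast_mul_qBinom_eq_neg_qPoch hq, qPoch_succ, ← pow_succ', Nat.add_sub_cancel,
    Nat.choose_two_right, Nat.add_sub_cancel, mul_comm (j + 1 + 1), neg_pow]
  field_simp [one_sub_pow_succ_ne_zero hq j]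
  ring

theorem sum_mul_qBinom_mul_qPoch_eq (w : ℕ → ℂ) (a : ℂ) (N : ℕ) :
    ∑ n ∈ range (N + 1),
        w n * qBinom q N n * a ^ n * q ^ (n ^ 2) * qPoch q (a * q ^ (n + 1)) (N - n) =
      ∑ k ∈ range (N + 1), qBinom q N k * (-a) ^ k * q ^ (k + 1).choose 2 *
        ∑ n ∈ range (k + 1), w n * (qBinom q k n * (-1) ^ n * q ^ n.choose 2) := by
  set F : ℕ → ℕ → ℂ := fun n m => qBinom q N (n + m) * (-a) ^ (n + m) *
    q ^ (n + m + 1).choose 2 * (w n * (qBinom q (n + m) n * (-1) ^ n * q ^ n.choose 2))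
  calc _ = ∑ n ∈ range (N + 1), ∑ m ∈ range (N + 1 - n), F n m := by
        refine sum_congr rfl fun n hn => ?_
        have hnN := mem_range.1 hn
        rw [qPoch_eq_sum_qBinom hq, show N - n + 1 = N + 1 - n by omega, mul_sum]
        refine sum_congr rfl fun m hm => ?_
        have hnm : n + m ≤ N := by have := mem_range.1 hm; omega
        have hsign : (-1 : ℂ) ^ m = (-1) ^ (n + m) * (-1) ^ n := by
          rw [pow_add, mul_right_comm, ← mul_pow]; norm_num
        calc _ = w n * (qBinom q N n * qBinom q (N - n) m) * a ^ (n + m) * (-1) ^ m *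
              q ^ (n ^ 2 + (n + 1) * m + m.choose 2) := by ring
          _ = F n m := by
            rw [qBinom_mul_qBinom hq hnm, Nat.sq_add_succ_mul_add_choose_two, hsign]
            ring
    _ = ∑ k ∈ range (N + 1), ∑ n ∈ range (k + 1), F n (k - n) :=
        (sum_range_diag_flip _ F).symm
    _ = _ := by
      refine sum_congr rfl fun k _ => ?_
      rw [mul_sum]
      refine sum_congr rfl fun n hn => ?_
      simp only [F, Nat.add_sub_cancel' (mem_range_succ_iff.1 hn)]

end

end

theorem stmt_4_general (N : ℕ) (q a : ℂ) (hq : ‖q‖ < 1)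
    (ha : ∀ k ∈ Finset.Icc 1 N, a * q ^ k ≠ 1) :
    qPoch q (a * q) N *
        ∑ n ∈ Finset.Icc 1 N, qBinom q N n *
          ((n : ℂ) * a ^ n * q ^ (n ^ 2)) / qPoch q (a * q) n
      = ∑ n ∈ Finset.Icc 1 N, qBinom q N n *
          (qPoch q q n * (-1) ^ (n - 1) * a ^ n * q ^ (n * (n + 1) / 2)) /
          (1 - q ^ n) := by
  have hqq := qPoch_self_ne_zero_of_norm_lt_one hq
  have hlhs : ∀ n ∈ Icc 1 N,
      qPoch q (a * q) N * (qBinom q N n * ((n : ℂ) * a ^ n * q ^ (n ^ 2)) / qPoch q (a * q) n) =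
        n * qBinom q N n * a ^ n * q ^ (n ^ 2) * qPoch q (a * q ^ (n + 1)) (N - n) := by
    intro n hn
    obtain ⟨-, hnN⟩ := mem_Icc.1 hn
    have hne : qPoch q (a * q) n ≠ 0 := qPoch_ne_zero fun k hk => by
      rw [mul_assoc, ← pow_succ']
      exact ha (k + 1) (mem_Icc.2 ⟨by omega, by omega⟩)
    rw [mul_div_assoc', mul_comm, mul_div_assoc, qPoch_div_qPoch hnN hne, mul_assoc a,
      ← pow_succ']
    ring
  calc _ = ∑ n ∈ Icc 1 N,
        n * qBinom q N n * a ^ n * q ^ (n ^ 2) * qPoch q (a * q ^ (n + 1)) (N - n) := by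
        rw [mul_sum]; exact sum_congr rfl hlhs
    _ = ∑ n ∈ range (N + 1),
        n * qBinom q N n * a ^ n * q ^ (n ^ 2) * qPoch q (a * q ^ (n + 1)) (N - n) :=
        sum_Icc_one_eq_sum_range (by simp) N
    _ = ∑ k ∈ range (N + 1), qBinom q N k * (-a) ^ k * q ^ (k + 1).choose 2 *
          ∑ n ∈ range (k + 1), (n : ℂ) * (qBinom q k n * (-1) ^ n * q ^ n.choose 2) :=
        sum_mul_qBinom_mul_qPoch_eq hqq _ a N
    _ = _ := by
        rw [← sum_Icc_one_eq_sum_range (by simp) N]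
        refine sum_congr rfl fun k hk => ?_
        rw [mul_div_assoc, qPoch_self_div_one_sub_pow_eq_sum hqq a (mem_Icc.1 hk).1]
        ring

theorem stmt_4 (N : ℕ) (hN : 1 ≤ N) (q a : ℂ) (hq : ‖q‖ < 1)
    (ha : ∀ k ∈ Finset.Icc 1 N, a * q ^ k ≠ 1) :
    qPoch q (a * q) N *
        ∑ n ∈ Finset.Icc 1 N, qBinom q N n *
          ((n : ℂ) * a ^ n * q ^ (n ^ 2)) / qPoch q (a * q) n
      = ∑ n ∈ Finset.Icc 1 N, qBinom q N n *
          (qPoch q q n * (-1) ^ (n - 1) * a ^ n * q ^ (n * (n + 1) / 2)) /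
          (1 - q ^ n) :=
  stmt_4_general N q a hq ha
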